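/- arXiv:2501.10306 — 2 statements merged into one kernel-verified Lean document; each statement's English description precedes it below -/
import Mathlib

section
/- Let u, T ∈ ℝ and let A be the 3×3 real matrix with rows (0, 1, 0), (−u², 2u, 1) and (−3uT², 3T², u). Then the characteristic polynomial of A is (λ − u)·((λ − u)² − 3T²), so the eigenvalues of A are λ₁ = u, λ₂ = u + √3·T and λ₃ = u − √3·T; if T ≠ 0 these three eigenvalues are real and pairwise distinct. -/
/-! Expanding the determinant gives the characteristic polynomial, whose quadratic factor
splits over `ℝ` as `(λ - u - √3 T)(λ - u + √3 T)`; the eigenvalues are its roots. -/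

open Polynomial

theorem Matrix.hasEigenvalue_toLin'_iff_isRoot_charpoly {R n : Type*} [CommRing R] [IsDomain R]
    [Fintype n] [DecidableEq n] (A : Matrix n n R) (μ : R) :
    Module.End.HasEigenvalue (Matrix.toLin' A) μ ↔ A.charpoly.IsRoot μ := by
  rw [Module.End.hasEigenvalue_iff_isRoot_charpoly, Matrix.charpoly_toLin']

theorem Polynomial.sq_X_sub_C_sub_C_sq {R : Type*} [CommRing R] (a s : R) :
    (X - C a) ^ 2 - C (s ^ 2) = (X - C (a + s)) * (X - C (a - s)) := by
  simp only [map_add, map_sub, map_pow]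
  ring

theorem charpoly_third_order_matrix (u T : ℝ) :
    (!![0, 1, 0; -u ^ 2, 2 * u, 1; -3 * u * T ^ 2, 3 * T ^ 2, u] : Matrix (Fin 3) (Fin 3) ℝ).charpoly
      = (X - C u) * ((X - C u) ^ 2 - C (3 * T ^ 2)) := by
  rw [Matrix.charpoly, Matrix.det_fin_three]
  simp only [Matrix.charmatrix_apply_eq, Matrix.charmatrix_apply_ne, ne_eq, Fin.reduceEq,
    not_false_eq_true, Matrix.of_apply, Matrix.cons_val', Matrix.cons_val_zero, Matrix.cons_val_one,
    Matrix.cons_val, Matrix.cons_val_fin_one, Fin.isValue, map_zero, map_one, map_neg, map_mul,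
    map_pow, map_ofNat]
  ring

/-- For the third-order macroscopic matrix
`A = !![0, 1, 0; −u², 2u, 1; −3uT², 3T², u]`: the characteristic polynomial is
`(λ − u)·((λ − u)² − 3T²)`, the eigenvalues are exactly `u`, `u + √3·T` and
`u − √3·T`, and for `T ≠ 0` they are pairwise distinct. -/
theorem third_order_matrix_eigenvalues (u T : ℝ)
    (A : Matrix (Fin 3) (Fin 3) ℝ)
    (hA : A = !![0, 1, 0; -u ^ 2, 2 * u, 1; -3 * u * T ^ 2, 3 * T ^ 2, u]) :
    A.charpoly = (X - C u) * ((X - C u) ^ 2 - C (3 * T ^ 2)) ∧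
    (∀ μ : ℝ, Module.End.HasEigenvalue (Matrix.toLin' A) μ ↔
      (μ = u ∨ μ = u + Real.sqrt 3 * T ∨ μ = u - Real.sqrt 3 * T)) ∧
    (T ≠ 0 →
      u ≠ u + Real.sqrt 3 * T ∧ u ≠ u - Real.sqrt 3 * T ∧
      u + Real.sqrt 3 * T ≠ u - Real.sqrt 3 * T) := by
  have hcharpoly := hA ▸ charpoly_third_order_matrix u T
  have hsplit : A.charpoly
      = (X - C u) * ((X - C (u + √3 * T)) * (X - C (u - √3 * T))) := by
    rw [hcharpoly, ← sq_X_sub_C_sub_C_sq, mul_pow, Real.sq_sqrt zero_le_three]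
  refine ⟨hcharpoly, fun μ => ?_, fun hT => ?_⟩
  · rw [Matrix.hasEigenvalue_toLin'_iff_isRoot_charpoly, hsplit]
    simp only [IsRoot.def, eval_mul, eval_sub, eval_X, eval_C, mul_eq_zero, sub_eq_zero]
  · have hshift : √3 * T ≠ 0 := mul_ne_zero (by positivity) hT
    refine ⟨fun h => hshift ?_, fun h => hshift ?_, fun h => hshift ?_⟩ <;> linarith
end

section
/- Let ρ be a Borel probability measure on ℝ^d and let F : ℝ^d → ℝ be continuous and bounded from below. Then lim_{α→∞} ( −(1/α) · log ( ∫_{ℝ^d} exp(−α F(x)) dρ(x) ) ) = inf_{x ∈ supp(ρ)} F(x), where supp(ρ) denotes the topological support of the measure ρ. -/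
open MeasureTheory Filter

/-- The support of a measure: the set of points all of whose neighbourhoods have
positive measure. -/
def measureSupport {E : Type*} [TopologicalSpace E] [MeasurableSpace E]
    (μ : Measure E) : Set E :=
  {x : E | ∀ U ∈ nhds x, 0 < μ U}

/-!
Since `ρ` is carried by its support, `F ≥ m := inf_{supp ρ} F` holds `ρ`-a.e., so
`∫ exp(-αF) dρ ≤ exp(-αm)`. For `t > m` the open set `{F < t}` meets the support and so has
positive mass `c`, giving `∫ exp(-αF) dρ ≥ c exp(-αt)`. After taking `-(1/α) log`, the two
bounds squeeze the limit between `m` and `t - (log c)/α → t`.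
-/

open Set Topology Real

lemma measureSupport_eq_support {E : Type*} [TopologicalSpace E] [MeasurableSpace E]
    (μ : Measure E) : measureSupport μ = μ.support := by
  ext x
  exact (Measure.mem_support_iff_forall x).symm

section LogBounds

variable {α y s : ℝ}

lemma le_neg_one_div_mul_log_iff (hα : 0 < α) (hy : 0 < y) :
    s ≤ -(1 / α) * log y ↔ y ≤ exp (-α * s) := by
  rw [← log_le_log_iff hy (exp_pos _), log_exp, neg_mul, one_div_mul_eq_div, le_neg,
    div_le_iff₀ hα]
  constructor <;> intro h <;> linarith

lemma neg_one_div_mul_log_le_iff (hα : 0 < α) (hy : 0 < y) :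
    -(1 / α) * log y ≤ s ↔ exp (-α * s) ≤ y := by
  rw [← log_le_log_iff (exp_pos _) hy, log_exp, neg_mul, one_div_mul_eq_div, neg_le,
    le_div_iff₀ hα]
  constructor <;> intro h <;> linarith

end LogBounds

theorem tendsto_neg_one_div_mul_log_of_exp_bounds {g : ℝ → ℝ} {m : ℝ}
    (hupper : ∀ᶠ α in atTop, g α ≤ exp (-α * m))
    (hlower : ∀ t, m < t → ∃ c > 0, ∀ᶠ α in atTop, exp (-α * t) * c ≤ g α) :
    Tendsto (fun α => -(1 / α) * log (g α)) atTop (𝓝 m) := by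
  have hpos : ∀ᶠ α in atTop, 0 < g α := by
    obtain ⟨c, hc, hgc⟩ := hlower (m + 1) (by linarith)
    filter_upwards [hgc] with α hα
    exact lt_of_lt_of_le (by positivity) hα
  rw [tendsto_order]
  constructor
  · intro a ha
    filter_upwards [hupper, hpos, eventually_gt_atTop 0] with α hg hg0 hα
    exact ha.trans_le ((le_neg_one_div_mul_log_iff hα hg0).2 hg)
  · intro b hb
    obtain ⟨t, hmt, htb⟩ := exists_between hb
    obtain ⟨c, hc, hgc⟩ := hlower t hmt
    have hlim : Tendsto (fun α => t - log c / α) atTop (𝓝 t) := by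
      simpa using (tendsto_const_nhds (x := t)).sub
        ((tendsto_const_nhds (x := log c)).div_atTop tendsto_id)
    filter_upwards [hlim.eventually_lt_const htb, hgc, hpos,
      eventually_gt_atTop 0] with α hlt hg hg0 hα
    refine lt_of_le_of_lt ((neg_one_div_mul_log_le_iff hα hg0).2 ?_) hlt
    calc exp (-α * (t - log c / α)) = exp (-α * t) * c := by
          rw [show -α * (t - log c / α) = -α * t + log c by field_simp; ring, exp_add,
            exp_log hc]
      _ ≤ g α := hg

section ExpIntegral

variable {E : Type*} [MeasurableSpace E] {μ : Measure E} {F : E → ℝ} {α : ℝ}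

lemma integrable_exp_neg_mul [IsFiniteMeasure μ] (hF : Measurable F)
    (hbd : BddBelow (range F)) (hα : 0 ≤ α) :
    Integrable (fun x => exp (-α * F x)) μ := by
  obtain ⟨B, hB⟩ := hbd
  refine Integrable.mono' (integrable_const (exp (-α * B)))
    (by fun_prop) (Eventually.of_forall fun x => ?_)
  rw [Real.norm_eq_abs, abs_of_pos (exp_pos _)]
  exact exp_le_exp.2 (mul_le_mul_of_nonpos_left (hB ⟨x, rfl⟩) (by linarith))

lemma integral_exp_neg_mul_le [IsProbabilityMeasure μ] {m : ℝ} (hF : ∀ᵐ x ∂μ, m ≤ F x)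
    (hα : 0 ≤ α) : ∫ x, exp (-α * F x) ∂μ ≤ exp (-α * m) := by
  calc ∫ x, exp (-α * F x) ∂μ ≤ ∫ _, exp (-α * m) ∂μ := by
        refine integral_mono_of_nonneg (Eventually.of_forall fun x => (exp_pos _).le)
          (integrable_const _) ?_
        filter_upwards [hF] with x hx
        exact exp_le_exp.2 (mul_le_mul_of_nonpos_left hx (by linarith))
    _ = exp (-α * m) := by simp

lemma exp_neg_mul_mul_measureReal_le_integral [IsFiniteMeasure μ] {U : Set E} {t : ℝ}
    (hU : MeasurableSet U) (hFU : ∀ x ∈ U, F x ≤ t)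
    (hint : Integrable (fun x => exp (-α * F x)) μ) (hα : 0 ≤ α) :
    exp (-α * t) * μ.real U ≤ ∫ x, exp (-α * F x) ∂μ :=
  calc exp (-α * t) * μ.real U ≤ ∫ x in U, exp (-α * F x) ∂μ :=
        setIntegral_ge_of_const_le_real hU (measure_ne_top μ U)
          (fun x hx => exp_le_exp.2 (mul_le_mul_of_nonpos_left (hFU x hx) (by linarith)))
          hint.integrableOn
    _ ≤ ∫ x, exp (-α * F x) ∂μ :=
        setIntegral_le_integral hint (Eventually.of_forall fun x => (exp_pos _).le)

end ExpIntegral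

section Support

variable {E : Type*} [TopologicalSpace E] [MeasurableSpace E] {μ : Measure E} {F : E → ℝ}

lemma measure_preimage_Iio_pos_of_sInf_lt [HereditarilyLindelofSpace E] [NeZero μ]
    (hF : Continuous F) {t : ℝ} (ht : sInf (F '' μ.support) < t) :
    0 < μ (F ⁻¹' Iio t) := by
  obtain ⟨_, ⟨x, hx, rfl⟩, hxt⟩ :=
    exists_lt_of_csInf_lt ((Measure.nonempty_support (NeZero.ne μ)).image F) ht
  exact (Measure.mem_support_iff_forall x).1 hx _ ((isOpen_Iio.preimage hF).mem_nhds hxt)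

theorem tendsto_neg_one_div_mul_log_integral_exp_neg_mul [HereditarilyLindelofSpace E]
    [OpensMeasurableSpace E] [IsProbabilityMeasure μ] (hF : Continuous F)
    (hbd : BddBelow (range F)) :
    Tendsto (fun α => -(1 / α) * log (∫ x, exp (-α * F x) ∂μ)) atTop
      (𝓝 (sInf (F '' μ.support))) := by
  apply tendsto_neg_one_div_mul_log_of_exp_bounds
  · filter_upwards [eventually_ge_atTop 0] with α hα
    refine integral_exp_neg_mul_le ?_ hα
    filter_upwards [Measure.support_mem_ae] with x hx
    exact csInf_le (hbd.mono (image_subset_range F _)) (mem_image_of_mem F hx)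
  · intro t ht
    have hU := measure_preimage_Iio_pos_of_sInf_lt hF ht
    refine ⟨μ.real (F ⁻¹' Iio t), ENNReal.toReal_pos hU.ne' (measure_ne_top μ _), ?_⟩
    filter_upwards [eventually_ge_atTop 0] with α hα
    exact exp_neg_mul_mul_measureReal_le_integral
      (hF.measurable measurableSet_Iio) (fun _ hx => le_of_lt hx)
      (integrable_exp_neg_mul hF.measurable hbd hα) hα

end Support

/-- Laplace principle: for a Borel probability measure `ρ` on `ℝ^d` and a continuous,
bounded-below function `F`, `−(1/α) log ∫ exp(−α F) dρ → inf_{supp ρ} F` as `α → ∞`. -/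
theorem laplace_principle (d : ℕ) (ρ : Measure (EuclideanSpace ℝ (Fin d)))
    [IsProbabilityMeasure ρ]
    (F : EuclideanSpace ℝ (Fin d) → ℝ) (hF : Continuous F)
    (hbd : BddBelow (Set.range F)) :
    Tendsto (fun α : ℝ => -(1 / α) * Real.log (∫ x, Real.exp (-α * F x) ∂ρ))
      atTop (nhds (sInf (F '' measureSupport ρ))) := by
  rw [measureSupport_eq_support]
  exact tendsto_neg_one_div_mul_log_integral_exp_neg_mul hF hbd
end
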